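/- arXiv:2006.04698 — 4 statements merged into one kernel-verified Lean document; each statement's English description precedes it below -/
import Mathlib

section
/- Let L be a convex body in ℝⁿ containing the origin in its interior, and let {L_t}, t ∈ [-1,1], be the Steiner shadow system of L along a unit direction e (so that L_1 = L, L_{-1} is the reflection of L in the hyperplane e^⊥, and L_0 is the Steiner symmetral of L with respect to e^⊥). Fix t₀ ∈ [-1,1]. Then the function (t,v) ↦ (ρ_{L_t}(v) − ρ_{L_{t₀}}(v))/(t − t₀) is uniformly bounded on ([-1,1] \ {t₀}) × S^{n−1}, where ρ denotes the radial function. -/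
/-!
Passing from `L_t` to `L_s` is the vertical shear `x ↦ x - (t - s) u(x̄) e`, which moves every
point by at most `ε = |t - s| · sup_P |u|`. All `L_t`, `t ∈ [-1, 1]`, contain a common ball
`B(0, r)` (the defining inequalities are affine in `t`, so `L_1 ∩ L_{-1} ⊆ L_t`) and lie in a
common ball `B(0, R)`. If `x ∈ L_t`, then `x - d ∈ L_s` with `‖d‖ ≤ ε`, and by convexity
`(r / (r + ε)) x` is a convex combination of `x - d` and `(r / ε) d ∈ B(0, r)`, so it lies in `L_s`.
Hence `ρ_{L_t} ≤ (1 + ε / r) ρ_{L_s} ≤ ρ_{L_s} + |t - s| R sup_P |u| / r`: the radial functions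
are uniformly Lipschitz in `t`.
-/

open Set

noncomputable def radialFn {n : ℕ} (M : Set (EuclideanSpace ℝ (Fin n)))
    (v : EuclideanSpace ℝ (Fin n)) : ℝ :=
  sSup {r : ℝ | 0 ≤ r ∧ r • v ∈ M}

open Metric Bornology Topology

section Shadow

variable {E : Type*} [NormedAddCommGroup E] [InnerProductSpace ℝ E]

def perpPart (e x : E) : E := x - inner ℝ x e • e

def shadowSystem (e : E) (P : Set E) (z w u : E → ℝ) (t : ℝ) : Set E :=
  {x | perpPart e x ∈ P ∧ z (perpPart e x) - (1 - t) * u (perpPart e x) ≤ inner ℝ x e ∧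
    inner ℝ x e ≤ w (perpPart e x) - (1 - t) * u (perpPart e x)}

variable {e : E} {P : Set E} {z w u f g : E → ℝ} {t : ℝ}

lemma perpPart_add_smul (he : ‖e‖ = 1) (x : E) (c : ℝ) :
    perpPart e (x + c • e) = perpPart e x := by
  simp only [perpPart, inner_add_left, real_inner_smul_left, real_inner_self_eq_norm_sq, he]
  module

lemma inner_add_smul_of_norm_eq_one (he : ‖e‖ = 1) (x : E) (c : ℝ) :
    inner ℝ (x + c • e) e = inner ℝ x e + c := by
  simp [inner_add_left, real_inner_smul_left, he]

lemma add_smul_mem_shadowSystem_iff (he : ‖e‖ = 1) (x : E) (c : ℝ) :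
    x + c • e ∈ shadowSystem e P z w u t ↔ perpPart e x ∈ P ∧
      z (perpPart e x) - (1 - t) * u (perpPart e x) ≤ inner ℝ x e + c ∧
      inner ℝ x e + c ≤ w (perpPart e x) - (1 - t) * u (perpPart e x) := by
  simp only [shadowSystem, mem_ofPred_eq, perpPart_add_smul he, inner_add_smul_of_norm_eq_one he]

lemma sub_smul_mem_shadowSystem (he : ‖e‖ = 1) {x : E} (hx : x ∈ shadowSystem e P z w u t)
    (s : ℝ) : x - ((t - s) * u (perpPart e x)) • e ∈ shadowSystem e P z w u s := by
  obtain ⟨hxP, hlow, hup⟩ := hx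
  rw [sub_eq_add_neg, ← neg_smul, add_smul_mem_shadowSystem_iff he]
  exact ⟨hxP, by linarith, by linarith⟩

lemma convex_setOf_perpPart_mem_of_between (hf : ConvexOn ℝ P f) (hg : ConcaveOn ℝ P g) :
    Convex ℝ {x | perpPart e x ∈ P ∧ f (perpPart e x) ≤ inner ℝ x e ∧
      inner ℝ x e ≤ g (perpPart e x)} := by
  have hlin : IsLinearMap ℝ fun x : E => (perpPart e x, inner ℝ x e) := by
    refine ⟨fun x y => ?_, fun c x => ?_⟩ <;> ext <;>
      simp only [perpPart, inner_add_left, inner_smul_left, Prod.fst_add, Prod.snd_add,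
        Prod.smul_fst, Prod.smul_snd, smul_eq_mul, RCLike.conj_to_real] <;> module
  convert (hf.convex_epigraph.inter hg.convex_hypograph).is_linear_preimage hlin using 1
  ext x
  simp only [mem_ofPred_eq, mem_preimage, mem_inter_iff]
  tauto

lemma convex_shadowSystem (hz : ConvexOn ℝ P z) (hw : ConcaveOn ℝ P w)
    (hu : ∀ x, u x = (z x + w x) / 2) (ht : t ∈ Icc (-1 : ℝ) 1) :
    Convex ℝ (shadowSystem e P z w u t) := by
  have hplus : 0 ≤ (1 + t) / 2 := by linarith [ht.1]
  have hminus : 0 ≤ (1 - t) / 2 := by linarith [ht.2]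
  have hlow : ConvexOn ℝ P fun p => z p - (1 - t) * u p := by
    rw [show (fun p => z p - (1 - t) * u p) = ((1 + t) / 2) • z - ((1 - t) / 2) • w by
      funext p
      simp only [hu, Pi.sub_apply, Pi.smul_apply, smul_eq_mul]
      ring]
    exact (hz.smul hplus).sub (hw.smul hminus)
  have hup : ConcaveOn ℝ P fun p => w p - (1 - t) * u p := by
    rw [show (fun p => w p - (1 - t) * u p) = ((1 + t) / 2) • w - ((1 - t) / 2) • z by
      funext p
      simp only [hu, Pi.sub_apply, Pi.smul_apply, smul_eq_mul]
      ring]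
    exact (hw.smul hplus).sub (hz.smul hminus)
  exact convex_setOf_perpPart_mem_of_between hlow hup

lemma shadowSystem_one_inter_neg_one_subset (ht : t ∈ Icc (-1 : ℝ) 1) :
    shadowSystem e P z w u 1 ∩ shadowSystem e P z w u (-1) ⊆ shadowSystem e P z w u t := by
  rintro x ⟨⟨hxP, hlow₁, hup₁⟩, -, hlow₂, hup₂⟩
  have hplus : 0 ≤ 1 + t := by linarith [ht.1]
  have hminus : 0 ≤ 1 - t := by linarith [ht.2]
  refine ⟨hxP, ?_, ?_⟩
  · nlinarith [mul_nonneg hplus (sub_nonneg.2 hlow₁), mul_nonneg hminus (sub_nonneg.2 hlow₂)]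
  · nlinarith [mul_nonneg hplus (sub_nonneg.2 hup₁), mul_nonneg hminus (sub_nonneg.2 hup₂)]

lemma exists_closedBall_subset_shadowSystem
    (h₁ : (0 : E) ∈ interior (shadowSystem e P z w u 1))
    (h₂ : (0 : E) ∈ interior (shadowSystem e P z w u (-1))) :
    ∃ r > 0, ∀ t ∈ Icc (-1 : ℝ) 1, closedBall 0 r ⊆ shadowSystem e P z w u t := by
  have hnhds : shadowSystem e P z w u 1 ∩ shadowSystem e P z w u (-1) ∈ 𝓝 (0 : E) :=
    Filter.inter_mem (mem_interior_iff_mem_nhds.1 h₁) (mem_interior_iff_mem_nhds.1 h₂)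
  obtain ⟨r, hr, hsub⟩ := nhds_basis_closedBall.mem_iff.1 hnhds
  exact ⟨r, hr, fun t ht => hsub.trans (shadowSystem_one_inter_neg_one_subset ht)⟩

lemma abs_le_of_mem_shadowSystem_one (he : ‖e‖ = 1) {R : ℝ}
    (hR : shadowSystem e P z w u 1 ⊆ closedBall 0 R) {x : E}
    (hx : x ∈ shadowSystem e P z w u 1) {c : ℝ} (hzc : z (perpPart e x) ≤ c)
    (hcw : c ≤ w (perpPart e x)) : |c| ≤ R := by
  have hmem : x + (c - inner ℝ x e) • e ∈ shadowSystem e P z w u 1 := by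
    rw [add_smul_mem_shadowSystem_iff he]
    exact ⟨hx.1, by linarith, by linarith⟩
  calc |c| = |inner ℝ (x + (c - inner ℝ x e) • e) e| := by
        rw [inner_add_smul_of_norm_eq_one he, add_sub_cancel]
    _ ≤ ‖x + (c - inner ℝ x e) • e‖ * ‖e‖ := abs_real_inner_le_norm _ _
    _ ≤ R := by simpa [he] using hR hmem

lemma abs_le_of_shadowSystem_one_subset_closedBall (he : ‖e‖ = 1)
    (hzw : ∀ x ∈ P, z x ≤ w x) (hu : ∀ x, u x = (z x + w x) / 2)
    (hP : P ⊆ perpPart e '' shadowSystem e P z w u 1) {R : ℝ}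
    (hR : shadowSystem e P z w u 1 ⊆ closedBall 0 R) {p : E} (hp : p ∈ P) : |u p| ≤ R := by
  obtain ⟨x, hx, rfl⟩ := hP hp
  have hz := abs_le.1 (abs_le_of_mem_shadowSystem_one he hR hx le_rfl (hzw _ hp))
  have hw := abs_le.1 (abs_le_of_mem_shadowSystem_one he hR hx (hzw _ hp) le_rfl)
  rw [hu, abs_le]
  constructor <;> linarith

lemma shadowSystem_subset_closedBall (he : ‖e‖ = 1) {B R : ℝ} (hB : ∀ p ∈ P, |u p| ≤ B)
    (hR : shadowSystem e P z w u 1 ⊆ closedBall 0 R) (ht : t ∈ Icc (-1 : ℝ) 1) :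
    shadowSystem e P z w u t ⊆ closedBall 0 (R + 2 * B) := by
  intro x hx
  have hshift := hR (sub_smul_mem_shadowSystem he hx 1)
  rw [mem_closedBall_zero_iff] at hshift ⊢
  have hd : ‖((t - 1) * u (perpPart e x)) • e‖ ≤ 2 * B := by
    rw [norm_smul, he, mul_one, Real.norm_eq_abs, abs_mul]
    have h2 : |t - 1| ≤ 2 := abs_le.2 ⟨by linarith [ht.1], by linarith [ht.2]⟩
    exact mul_le_mul h2 (hB _ hx.1) (abs_nonneg _) zero_le_two
  calc ‖x‖ = ‖(x - ((t - 1) * u (perpPart e x)) • e) + ((t - 1) * u (perpPart e x)) • e‖ := by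
        rw [sub_add_cancel]
    _ ≤ R + 2 * B := (norm_add_le _ _).trans (add_le_add hshift hd)

end Shadow

lemma Convex.div_add_smul_mem_of_sub_mem {E : Type*} [SeminormedAddCommGroup E]
    [NormedSpace ℝ E] {M : Set E} (hM : Convex ℝ M) {r ε : ℝ} (hr : 0 < r) (hε : 0 < ε)
    (hball : closedBall 0 r ⊆ M) {x d : E} (hx : x - d ∈ M) (hd : ‖d‖ ≤ ε) :
    (r / (r + ε)) • x ∈ M := by
  have hq : (r / ε) • d ∈ M := hball <| by
    rw [mem_closedBall_zero_iff, norm_smul, Real.norm_of_nonneg (by positivity)]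
    calc r / ε * ‖d‖ ≤ r / ε * ε := by gcongr
      _ = r := div_mul_cancel₀ r hε.ne'
  have hcomb := hM hx hq (a := r / (r + ε)) (b := ε / (r + ε)) (by positivity) (by positivity)
    (by field_simp)
  convert hcomb using 1
  rw [smul_smul, show ε / (r + ε) * (r / ε) = r / (r + ε) by field_simp, smul_sub]
  abel

section Radial

variable {n : ℕ} {M M' : Set (EuclideanSpace ℝ (Fin n))} {v : EuclideanSpace ℝ (Fin n)}

lemma radialFn_nonneg : 0 ≤ radialFn M v :=
  Real.sSup_nonneg fun _ h => h.1

lemma radialFn_le_of_subset_closedBall (hv : ‖v‖ = 1) {R : ℝ} (hR0 : 0 ≤ R)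
    (hR : M ⊆ closedBall 0 R) : radialFn M v ≤ R :=
  Real.sSup_le (fun ρ ⟨hρ, hm⟩ => by
    simpa [norm_smul, hv, abs_of_nonneg hρ] using hR hm) hR0

lemma le_radialFn (hM : IsBounded M) (hv : v ≠ 0) {ρ : ℝ} (hρ : 0 ≤ ρ) (hm : ρ • v ∈ M) :
    ρ ≤ radialFn M v := by
  obtain ⟨R, hR⟩ := isBounded_iff_forall_norm_le.1 hM
  have hv' : 0 < ‖v‖ := norm_pos_iff.2 hv
  refine le_csSup ⟨R / ‖v‖, fun σ ⟨hσ, hσm⟩ => ?_⟩ ⟨hρ, hm⟩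
  rw [le_div_iff₀ hv']
  simpa [norm_smul, abs_of_nonneg hσ] using hR _ hσm

lemma radialFn_le_mul_of_forall_sub_mem (hM : Convex ℝ M) (hMb : IsBounded M) {r ε : ℝ}
    (hr : 0 < r) (hε : 0 < ε) (hball : closedBall 0 r ⊆ M)
    (hshift : ∀ x ∈ M', ∃ d, ‖d‖ ≤ ε ∧ x - d ∈ M) (hv : v ≠ 0) :
    radialFn M' v ≤ (1 + ε / r) * radialFn M v := by
  refine Real.sSup_le (fun ρ ⟨hρ, hm⟩ => ?_) (mul_nonneg (by positivity) radialFn_nonneg)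
  obtain ⟨d, hd, hxd⟩ := hshift _ hm
  have hscaled : r / (r + ε) * ρ ≤ radialFn M v :=
    le_radialFn hMb hv (by positivity)
      (by rw [mul_smul]; exact hM.div_add_smul_mem_of_sub_mem hr hε hball hxd hd)
  calc ρ = (1 + ε / r) * (r / (r + ε) * ρ) := by field_simp
    _ ≤ (1 + ε / r) * radialFn M v := by gcongr

lemma radialFn_shadowSystem_le_add {e : EuclideanSpace ℝ (Fin n)} (he : ‖e‖ = 1)
    {P : Set (EuclideanSpace ℝ (Fin n))} {z w u : EuclideanSpace ℝ (Fin n) → ℝ}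
    (hz : ConvexOn ℝ P z) (hw : ConcaveOn ℝ P w) (hu : ∀ x, u x = (z x + w x) / 2)
    {B r R : ℝ} (hB0 : 0 < B) (hB : ∀ p ∈ P, |u p| ≤ B) (hr : 0 < r)
    {s : ℝ} (hs : s ∈ Icc (-1 : ℝ) 1) (hball : closedBall 0 r ⊆ shadowSystem e P z w u s)
    (hR0 : 0 ≤ R) (hR : shadowSystem e P z w u s ⊆ closedBall 0 R) {t : ℝ} (hts : t ≠ s)
    (hv : ‖v‖ = 1) :
    radialFn (shadowSystem e P z w u t) v ≤
      radialFn (shadowSystem e P z w u s) v + |t - s| * (B / r * R) := by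
  have hε : 0 < |t - s| * B := mul_pos (abs_pos.2 (sub_ne_zero.2 hts)) hB0
  have hshift : ∀ x ∈ shadowSystem e P z w u t,
      ∃ d, ‖d‖ ≤ |t - s| * B ∧ x - d ∈ shadowSystem e P z w u s := fun x hx =>
    ⟨((t - s) * u (perpPart e x)) • e, by
      rw [norm_smul, he, mul_one, Real.norm_eq_abs, abs_mul]
      exact mul_le_mul_of_nonneg_left (hB _ hx.1) (abs_nonneg _),
      sub_smul_mem_shadowSystem he hx s⟩
  have hρ := radialFn_le_of_subset_closedBall hv hR0 hR
  calc radialFn (shadowSystem e P z w u t) v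
      ≤ (1 + |t - s| * B / r) * radialFn (shadowSystem e P z w u s) v :=
        radialFn_le_mul_of_forall_sub_mem (convex_shadowSystem hz hw hu hs)
          (isBounded_closedBall.subset hR) hr hε hball hshift
          (norm_ne_zero_iff.1 (by rw [hv]; exact one_ne_zero))
    _ = radialFn (shadowSystem e P z w u s) v +
          |t - s| * B / r * radialFn (shadowSystem e P z w u s) v := by ring
    _ ≤ radialFn (shadowSystem e P z w u s) v + |t - s| * B / r * R := by gcongr
    _ = radialFn (shadowSystem e P z w u s) v + |t - s| * (B / r * R) := by ring

end Radial

theorem steiner_radial_difference_quotient_bounded_general {n : ℕ}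
    (e : EuclideanSpace ℝ (Fin n)) (he : ‖e‖ = 1)
    (L : Set (EuclideanSpace ℝ (Fin n)))
    (hcomp : IsCompact L)
    (P : Set (EuclideanSpace ℝ (Fin n)))
    (hP : P = (fun x => x - (inner ℝ x e : ℝ) • e) '' L)
    (z w u : EuclideanSpace ℝ (Fin n) → ℝ)
    (hz : ConvexOn ℝ P z) (hw : ConcaveOn ℝ P w) (hzw : ∀ x ∈ P, z x ≤ w x)
    (hu : ∀ x, u x = (z x + w x) / 2)
    (Lt : ℝ → Set (EuclideanSpace ℝ (Fin n)))
    (hLt : ∀ t : ℝ, Lt t =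
      {x : EuclideanSpace ℝ (Fin n) | (x - (inner ℝ x e : ℝ) • e) ∈ P ∧
        z (x - (inner ℝ x e : ℝ) • e) - (1 - t) * u (x - (inner ℝ x e : ℝ) • e) ≤ (inner ℝ x e : ℝ) ∧
        (inner ℝ x e : ℝ) ≤ w (x - (inner ℝ x e : ℝ) • e) - (1 - t) * u (x - (inner ℝ x e : ℝ) • e)})
    (hL1 : Lt 1 = L)
    (hbody : ∀ t ∈ Icc (-1 : ℝ) 1, (0 : EuclideanSpace ℝ (Fin n)) ∈ interior (Lt t))
    (t₀ : ℝ) (ht₀ : t₀ ∈ Icc (-1 : ℝ) 1) :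
    ∃ C : ℝ, ∀ t ∈ Icc (-1 : ℝ) 1, t ≠ t₀ →
      ∀ v : EuclideanSpace ℝ (Fin n), ‖v‖ = 1 →
        |(radialFn (Lt t) v - radialFn (Lt t₀) v) / (t - t₀)| ≤ C := by
  obtain rfl : Lt = shadowSystem e P z w u := funext hLt
  subst hL1
  obtain ⟨R, hR0, hR⟩ := hcomp.isBounded.subset_closedBall_lt 0 0
  have hPimg : P ⊆ perpPart e '' shadowSystem e P z w u 1 := hP.le
  have hu_bdd : ∀ p ∈ P, |u p| ≤ R := fun p hp =>
    abs_le_of_shadowSystem_one_subset_closedBall he hzw hu hPimg hR hp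
  obtain ⟨r, hr, hball⟩ := exists_closedBall_subset_shadowSystem
    (hbody 1 ⟨by norm_num, le_rfl⟩) (hbody (-1) ⟨le_rfl, by norm_num⟩)
  have hkey {t s : ℝ} (hs : s ∈ Icc (-1 : ℝ) 1) (hts : t ≠ s) {v : EuclideanSpace ℝ (Fin n)}
      (hv : ‖v‖ = 1) :=
    radialFn_shadowSystem_le_add he hz hw hu hR0 hu_bdd hr hs (hball s hs) (by positivity)
      (shadowSystem_subset_closedBall he hu_bdd hR hs) hts hv
  refine ⟨R / r * (R + 2 * R), fun t ht htne v hv => ?_⟩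
  have h₁ := hkey ht₀ htne hv
  have h₂ := hkey ht htne.symm hv
  rw [abs_sub_comm] at h₂
  rw [abs_div, div_le_iff₀ (abs_pos.2 (sub_ne_zero.2 htne)), mul_comm]
  exact abs_sub_le_iff.2 ⟨by linarith, by linarith⟩

/-- For the Steiner shadow system `L_t` of a convex body `L` (origin in the
interior) along a unit direction `e`, the difference quotients of the radial functions at
`t₀ ∈ [-1,1]` are uniformly bounded on `([-1,1] \ {t₀}) × S^{n-1}`. -/
theorem steiner_radial_difference_quotient_bounded {n : ℕ}
    (e : EuclideanSpace ℝ (Fin n)) (he : ‖e‖ = 1)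
    (L : Set (EuclideanSpace ℝ (Fin n)))
    (hcomp : IsCompact L) (hconv : Convex ℝ L)
    (h0 : (0 : EuclideanSpace ℝ (Fin n)) ∈ interior L)
    (P : Set (EuclideanSpace ℝ (Fin n)))
    (hP : P = (fun x => x - (inner ℝ x e : ℝ) • e) '' L)
    (z w u : EuclideanSpace ℝ (Fin n) → ℝ)
    (hz : ConvexOn ℝ P z) (hw : ConcaveOn ℝ P w) (hzw : ∀ x ∈ P, z x ≤ w x)
    (hu : ∀ x, u x = (z x + w x) / 2)
    (Lt : ℝ → Set (EuclideanSpace ℝ (Fin n)))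
    (hLt : ∀ t : ℝ, Lt t =
      {x : EuclideanSpace ℝ (Fin n) | (x - (inner ℝ x e : ℝ) • e) ∈ P ∧
        z (x - (inner ℝ x e : ℝ) • e) - (1 - t) * u (x - (inner ℝ x e : ℝ) • e) ≤ (inner ℝ x e : ℝ) ∧
        (inner ℝ x e : ℝ) ≤ w (x - (inner ℝ x e : ℝ) • e) - (1 - t) * u (x - (inner ℝ x e : ℝ) • e)})
    (hL1 : Lt 1 = L)
    (hbody : ∀ t ∈ Icc (-1 : ℝ) 1, (0 : EuclideanSpace ℝ (Fin n)) ∈ interior (Lt t))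
    (t₀ : ℝ) (ht₀ : t₀ ∈ Icc (-1 : ℝ) 1) :
    ∃ C : ℝ, ∀ t ∈ Icc (-1 : ℝ) 1, t ≠ t₀ →
      ∀ v : EuclideanSpace ℝ (Fin n), ‖v‖ = 1 →
        |(radialFn (Lt t) v - radialFn (Lt t₀) v) / (t - t₀)| ≤ C :=
  steiner_radial_difference_quotient_bounded_general e he L hcomp P hP z w u hz hw hzw hu Lt hLt hL1
    hbody t₀ ht₀
end

section
/- Let 0 < a < b and let G : [a,b] → (0,∞) be continuous such that for some antiderivative H of G, the function θ ↦ θG(θ) + nH(θ) is strictly increasing on [a,b]. Then G extends to a continuous function Ḡ : (0,∞) → (0,∞) such that there exists a continuous strictly increasing function F : [0,∞) → ℝ with F(0) = 0 and Ḡ(θ) = d/dθ ( ∫₀¹ r^{n−1} F(rθ) dr ) for all θ ∈ (0,∞). -/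
open Set intervalIntegral

/-!
Extend `G` by constants outside `[a, b]` and let `J θ = ∫₀^θ Ḡ`. The profile
`F θ = θ Ḡ(θ) + n J(θ)` satisfies `∫₀¹ r^{n-1} F(rθ) dr = J(θ)`, since `r^{n-1} F(rθ)`
is the `r`-derivative of `r^n J(rθ)`; so the derivative in `θ` of the left side is `Ḡ`.
On `[a, b]`, `F = θ G + n H + const` is strictly increasing by hypothesis, and outside `[a, b]`
it is affine with slope `(n + 1) G(a)` resp. `(n + 1) G(b)`, which is positive.
-/

theorem StrictMonoOn.Iic_Icc_Ici {α β : Type*} [LinearOrder α] [Preorder β] {f : α → β}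
    {a b : α} (hab : a ≤ b) (h₁ : StrictMonoOn f (Iic a)) (h₂ : StrictMonoOn f (Icc a b))
    (h₃ : StrictMonoOn f (Ici b)) : StrictMono f := by
  refine StrictMonoOn.Iic_union_Ici ?_ h₃
  rw [← Iic_union_Icc_eq_Iic hab]
  exact h₁.union h₂ isGreatest_Iic (isLeast_Icc hab)

noncomputable def radialProfile (n : ℕ) (g : ℝ → ℝ) (θ : ℝ) : ℝ :=
  θ * g θ + n * ∫ t in (0 : ℝ)..θ, g t

section

variable {n : ℕ} {g : ℝ → ℝ}

@[simp]
theorem radialProfile_zero : radialProfile n g 0 = 0 := by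
  simp [radialProfile]

theorem continuous_radialProfile (hg : Continuous g) : Continuous (radialProfile n g) := by
  have := continuous_primitive (μ := MeasureTheory.volume)
    (fun _ _ => hg.intervalIntegrable _ _) 0
  unfold radialProfile
  fun_prop

theorem integral_pow_mul_radialProfile (hg : Continuous g) (hn : 0 < n) (s : ℝ) :
    ∫ r in (0 : ℝ)..1, r ^ (n - 1) * radialProfile n g (r * s) = ∫ t in (0 : ℝ)..s, g t := by
  have hderiv : ∀ r ∈ uIcc (0 : ℝ) 1,
      HasDerivAt (fun r => r ^ n * ∫ t in (0 : ℝ)..r * s, g t)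
        (r ^ (n - 1) * radialProfile n g (r * s)) r := by
    intro r _
    have hJ : HasDerivAt (fun r => ∫ t in (0 : ℝ)..r * s, g t) (g (r * s) * s) r :=
      (hg.integral_hasStrictDerivAt 0 (r * s)).hasDerivAt.comp
        (h₂ := fun u => ∫ t in (0 : ℝ)..u, g t) r (hasDerivAt_mul_const s)
    refine ((hasDerivAt_pow n r).mul hJ).congr_deriv ?_
    obtain ⟨m, rfl⟩ := Nat.exists_eq_add_one_of_ne_zero hn.ne'
    simp only [radialProfile, Nat.add_sub_cancel, pow_succ]
    push_cast
    ring
  have hint : IntervalIntegrable (fun r => r ^ (n - 1) * radialProfile n g (r * s))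
      MeasureTheory.volume 0 1 :=
    ((continuous_pow _).mul ((continuous_radialProfile hg).comp
      (continuous_mul_const s))).intervalIntegrable _ _
  rw [integral_eq_sub_of_hasDerivAt hderiv hint]
  simp [hn.ne']

theorem hasDerivAt_integral_pow_mul_radialProfile (hg : Continuous g) (hn : 0 < n) (θ : ℝ) :
    HasDerivAt (fun s => ∫ r in (0 : ℝ)..1, r ^ (n - 1) * radialProfile n g (r * s))
      (g θ) θ := by
  simp only [integral_pow_mul_radialProfile hg hn]
  exact (hg.integral_hasStrictDerivAt 0 θ).hasDerivAt

theorem radialProfile_sub_radialProfile (hg : Continuous g) (x y : ℝ) :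
    radialProfile n g y - radialProfile n g x = y * g y - x * g x + n * ∫ t in x..y, g t := by
  rw [← integral_interval_sub_left (hg.intervalIntegrable 0 y) (hg.intervalIntegrable 0 x)]
  simp only [radialProfile]
  ring

theorem strictMonoOn_radialProfile_of_eqOn_const {s : Set ℝ} {c : ℝ} (hg : Continuous g)
    (hs : s.OrdConnected) (hc : 0 < c) (hgs : EqOn g (fun _ => c) s) :
    StrictMonoOn (radialProfile n g) s := by
  intro x hx y hy hxy
  rw [← sub_pos, radialProfile_sub_radialProfile hg, hgs hx, hgs hy,
    integral_congr (hgs.mono (hs.uIcc_subset hx hy)), integral_const, smul_eq_mul]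
  have : 0 < (y - x) * c := mul_pos (sub_pos.2 hxy) hc
  nlinarith [mul_nonneg (Nat.cast_nonneg n : (0 : ℝ) ≤ n) this.le]

theorem strictMonoOn_radialProfile_Icc {H : ℝ → ℝ} {a b : ℝ} (hg : Continuous g)
    (hH : ∀ θ ∈ Icc a b, HasDerivAt H (g θ) θ)
    (hmono : StrictMonoOn (fun θ => θ * g θ + n * H θ) (Icc a b)) :
    StrictMonoOn (radialProfile n g) (Icc a b) := by
  intro x hx y hy hxy
  have hFTC : ∫ t in x..y, g t = H y - H x :=
    integral_eq_sub_of_hasDerivAt (fun t ht => hH t (ordConnected_Icc.uIcc_subset hx hy ht))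
      (hg.intervalIntegrable x y)
  rw [← sub_pos, radialProfile_sub_radialProfile hg, hFTC]
  linarith [hmono hx hy hxy]

end

theorem extension_to_A_class_general (n : ℕ) (hn : 0 < n) (a b : ℝ) (hab : a < b)
    (G H : ℝ → ℝ) (hGcont : ContinuousOn G (Icc a b))
    (hGpos : ∀ θ ∈ Icc a b, 0 < G θ)
    (hH : ∀ θ ∈ Icc a b, HasDerivAt H (G θ) θ)
    (hmono : StrictMonoOn (fun θ => θ * G θ + n * H θ) (Icc a b)) :
    ∃ Gbar : ℝ → ℝ, ContinuousOn Gbar (Ioi 0) ∧ (∀ θ ∈ Ioi (0 : ℝ), 0 < Gbar θ) ∧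
      (∀ θ ∈ Icc a b, Gbar θ = G θ) ∧
      ∃ F : ℝ → ℝ, ContinuousOn F (Ici 0) ∧ StrictMonoOn F (Ici 0) ∧ F 0 = 0 ∧
        ∀ θ ∈ Ioi (0 : ℝ),
          HasDerivAt (fun s => ∫ r in (0 : ℝ)..1, r ^ (n - 1) * F (r * s)) (Gbar θ) θ := by
  set Gbar := IccExtend hab.le ((Icc a b).domRestrict G)
  have hGbar_cont : Continuous Gbar :=
    continuous_IccExtend_iff.2 (continuousOn_iff_continuous_domRestrict.1 hGcont)
  have hGbar_eq : EqOn Gbar G (Icc a b) := fun θ hθ => IccExtend_of_mem _ _ hθ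
  have hF_mono : StrictMono (radialProfile n Gbar) := by
    refine StrictMonoOn.Iic_Icc_Ici hab.le ?_ ?_ ?_
    · exact strictMonoOn_radialProfile_of_eqOn_const hGbar_cont ordConnected_Iic
        (hGpos a (left_mem_Icc.2 hab.le)) fun θ hθ => IccExtend_of_le_left _ _ hθ
    · exact strictMonoOn_radialProfile_Icc hGbar_cont (fun θ hθ => hGbar_eq hθ ▸ hH θ hθ)
        (hmono.congr fun θ hθ => by simp only [hGbar_eq hθ])
    · exact strictMonoOn_radialProfile_of_eqOn_const hGbar_cont ordConnected_Ici
        (hGpos b (right_mem_Icc.2 hab.le)) fun θ hθ => IccExtend_of_right_le _ _ hθ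
  exact ⟨Gbar, hGbar_cont.continuousOn, fun θ _ => hGpos _ (projIcc a b hab.le θ).2, hGbar_eq,
    radialProfile n Gbar, (continuous_radialProfile hGbar_cont).continuousOn,
    hF_mono.strictMonoOn _, radialProfile_zero,
    fun θ _ => hasDerivAt_integral_pow_mul_radialProfile hGbar_cont hn θ⟩

/-- If `G : [a,b] → (0,∞)` is continuous and `θ ↦ θG(θ) + nH(θ)` is strictly
increasing for an antiderivative `H` of `G`, then `G` extends to a continuous positive
function `Ḡ` on `(0,∞)` of the form `Ḡ(θ) = d/dθ ∫₀¹ r^{n-1} F(rθ) dr` for a continuous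
strictly increasing `F : [0,∞) → ℝ` with `F(0) = 0`. -/
theorem extension_to_A_class (n : ℕ) (hn : 0 < n) (a b : ℝ) (ha : 0 < a) (hab : a < b)
    (G H : ℝ → ℝ) (hGcont : ContinuousOn G (Icc a b))
    (hGpos : ∀ θ ∈ Icc a b, 0 < G θ)
    (hH : ∀ θ ∈ Icc a b, HasDerivAt H (G θ) θ)
    (hmono : StrictMonoOn (fun θ => θ * G θ + n * H θ) (Icc a b)) :
    ∃ Gbar : ℝ → ℝ, ContinuousOn Gbar (Ioi 0) ∧ (∀ θ ∈ Ioi (0 : ℝ), 0 < Gbar θ) ∧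
      (∀ θ ∈ Icc a b, Gbar θ = G θ) ∧
      ∃ F : ℝ → ℝ, ContinuousOn F (Ici 0) ∧ StrictMonoOn F (Ici 0) ∧ F 0 = 0 ∧
        ∀ θ ∈ Ioi (0 : ℝ),
          HasDerivAt (fun s => ∫ r in (0 : ℝ)..1, r ^ (n - 1) * F (r * s)) (Gbar θ) θ :=
  extension_to_A_class_general n hn a b hab G H hGcont hGpos hH hmono
end

section
/- Let G ∈ 𝒜(n), let 0 < c₁ < c₂ and 0 < a₁ < a₂, and assume G(c₁) ≥ a₁ and G(c₂) ≤ a₂. Then there exists ε₀ > 0 such that for every ε ∈ (0,ε₀) there is a function G_ε ∈ 𝒜(n) with: (i) G_ε(θ) = G(θ) for all θ ∈ [c₁+ε, c₂−ε], and G_ε(c₁) = a₁, G_ε(c₂) = a₂; (ii) the family (ε,θ) ↦ G_ε(θ) is uniformly bounded on (0,ε₀) × [c₁,c₂]. -/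
/-!
For continuous positive `G`, membership in `𝒜(n)` is equivalent to strict monotonicity of
`K(θ) = θ^(n+1) G(θ)`; the link is `K = θ^n (M - nH)` with `M = θG + nH`. Hence `𝒜(n)` is closed
under multiplication by continuous, positive, nondecreasing factors, and `G_ε = ρ_ε G` works,
where `ρ_ε` is `a₁ / G(c₁) ≤ 1` up to `c₁`, rises linearly to `1` on `[c₁, c₁ + ε]`, is `1` up to
`c₂ - ε` and rises linearly to `a₂ / G(c₂) ≥ 1` on `[c₂ - ε, c₂]`. On `[c₁, c₂]` the family is then
bounded by `a₂ / G(c₂) · max |G|`.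
-/

open Set

/-- The class `𝒜(n)`: continuous positive functions `G` on `(0,∞)` such that
`θ ↦ θG(θ) + nH(θ)` is strictly increasing for some antiderivative `H` of `G`. -/
def MemA (n : ℕ) (G : ℝ → ℝ) : Prop :=
  ContinuousOn G (Ioi 0) ∧ (∀ θ ∈ Ioi (0 : ℝ), 0 < G θ) ∧
    ∃ H : ℝ → ℝ, (∀ θ ∈ Ioi (0 : ℝ), HasDerivAt H (G θ) θ) ∧
      StrictMonoOn (fun θ => θ * G θ + n * H θ) (Ioi 0)

theorem le_of_hasDerivAt_of_nonneg {f f' : ℝ → ℝ} {a b : ℝ} (hab : a ≤ b)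
    (hf : ∀ x ∈ Icc a b, HasDerivAt f (f' x) x) (hf' : ∀ x ∈ Ioo a b, 0 ≤ f' x) :
    f a ≤ f b := by
  refine monotoneOn_of_hasDerivWithinAt_nonneg (convex_Icc a b)
    (fun x hx => (hf x hx).continuousAt.continuousWithinAt) (fun x hx => ?_)
    (by rwa [interior_Icc]) (left_mem_Icc.2 hab) (right_mem_Icc.2 hab) hab
  rw [interior_Icc] at hx ⊢
  exact (hf x (Ioo_subset_Icc_self hx)).hasDerivWithinAt

-- Written without `x ^ (n - 1)` so that no case split on `n = 0` is needed later.
theorem hasDerivAt_pow_of_ne_zero (n : ℕ) {x : ℝ} (hx : x ≠ 0) :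
    HasDerivAt (fun y => y ^ n) (n * x ^ n / x) x := by
  refine (hasDerivAt_pow n x).congr_deriv ?_
  rcases n with _ | m
  · simp
  · rw [pow_succ]
    field_simp
    simp

theorem ContinuousOn.exists_hasDerivAt_Ioi {G : ℝ → ℝ} {a : ℝ} (hG : ContinuousOn G (Ioi a)) :
    ∃ H : ℝ → ℝ, ∀ θ ∈ Ioi a, HasDerivAt H (G θ) θ := by
  refine ⟨fun θ => ∫ t in (a + 1)..θ, G t, fun θ hθ => ?_⟩
  have hsub : uIcc (a + 1) θ ⊆ Ioi a := fun x hx =>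
    lt_of_lt_of_le (lt_min (lt_add_one a) hθ) hx.1
  exact intervalIntegral.integral_hasDerivAt_right (hG.mono hsub).intervalIntegrable
    (hG.stronglyMeasurableAtFilter isOpen_Ioi θ hθ) (hG.continuousAt (isOpen_Ioi.mem_nhds hθ))

theorem MemA.strictMonoOn_pow_succ_mul {n : ℕ} {G : ℝ → ℝ} (hG : MemA n G) :
    StrictMonoOn (fun θ => θ ^ (n + 1) * G θ) (Ioi 0) := by
  obtain ⟨-, -, H, hH, hM⟩ := hG
  intro a (ha : 0 < a) b (hb : 0 < b) hab
  set M := fun θ => θ * G θ + n * H θ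
  -- `φ θ = θ ^ n (M b - n H θ)` has derivative `n θ ^ (n - 1) (M b - M θ) ≥ 0` on `[a, b]`,
  -- while `φ b = K b` and `φ a > K a`.
  have hφ : a ^ n * (M b - n * H a) ≤ b ^ n * (M b - n * H b) := by
    refine le_of_hasDerivAt_of_nonneg (f := fun x => x ^ n * (M b - n * H x))
      (f' := fun x => n * x ^ n / x * (M b - M x)) hab.le (fun x hx => ?_) (fun x hx => ?_)
    · have hx0 : 0 < x := ha.trans_le hx.1
      refine ((hasDerivAt_pow_of_ne_zero n hx0.ne').mul
        (((hH x hx0).const_mul (n : ℝ)).const_sub (M b))).congr_deriv ?_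
      simp only [M]
      field_simp
      ring
    · have hx0 : 0 < x := ha.trans hx.1
      exact mul_nonneg (by positivity) (sub_nonneg.2 (hM.monotoneOn hx0 hb hx.2.le))
  have hMab : M a < M b := hM ha hb hab
  have hφa : a ^ n * (M b - n * H a) = a ^ (n + 1) * G a + a ^ n * (M b - M a) := by
    simp only [M]; ring
  have hφb : b ^ n * (M b - n * H b) = b ^ (n + 1) * G b := by
    simp only [M]; ring
  have : 0 < a ^ n * (M b - M a) := mul_pos (pow_pos ha n) (sub_pos.2 hMab)
  show a ^ (n + 1) * G a < b ^ (n + 1) * G b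
  linarith

theorem memA_of_strictMonoOn_pow_succ_mul {n : ℕ} {G : ℝ → ℝ} (hGc : ContinuousOn G (Ioi 0))
    (hGpos : ∀ θ ∈ Ioi (0 : ℝ), 0 < G θ)
    (hK : StrictMonoOn (fun θ => θ ^ (n + 1) * G θ) (Ioi 0)) : MemA n G := by
  obtain ⟨H, hH⟩ := hGc.exists_hasDerivAt_Ioi
  refine ⟨hGc, hGpos, H, hH, ?_⟩
  intro a (ha : 0 < a) b (hb : 0 < b) hab
  set Ka := a ^ (n + 1) * G a
  -- `ψ θ = K a / θ ^ n + n H θ` has derivative `n (G θ - K a / θ ^ (n + 1)) ≥ 0` on `[a, b]`,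
  -- while `ψ a = M a` and `ψ b < M b`.
  have hψ : Ka * (a ^ n)⁻¹ + n * H a ≤ Ka * (b ^ n)⁻¹ + n * H b := by
    refine le_of_hasDerivAt_of_nonneg (f := fun x => Ka * (x ^ n)⁻¹ + n * H x)
      (f' := fun x => n * (G x - Ka / x ^ (n + 1))) hab.le (fun x hx => ?_) (fun x hx => ?_)
    · have hx0 : 0 < x := ha.trans_le hx.1
      refine ((((hasDerivAt_pow_of_ne_zero n hx0.ne').inv (pow_ne_zero n hx0.ne')).const_mul
        Ka).add ((hH x hx0).const_mul (n : ℝ))).congr_deriv ?_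
      field_simp
      ring
    · have hx0 : 0 < x := ha.trans hx.1
      have hKx : Ka ≤ x ^ (n + 1) * G x := hK.monotoneOn ha hx0 hx.1.le
      exact mul_nonneg (Nat.cast_nonneg n)
        (sub_nonneg.2 ((div_le_iff₀ (by positivity)).2 (by linarith)))
  have hψa : Ka * (a ^ n)⁻¹ = a * G a := by
    simp only [Ka, pow_succ]
    field_simp
  have hψb : Ka * (b ^ n)⁻¹ < b * G b := by
    rw [← div_eq_mul_inv, div_lt_iff₀ (pow_pos hb n)]
    calc Ka < b ^ (n + 1) * G b := hK ha hb hab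
      _ = b * G b * b ^ n := by ring
  show a * G a + n * H a < b * G b + n * H b
  linarith

theorem MemA.mul_of_monotoneOn {n : ℕ} {G ρ : ℝ → ℝ} (hG : MemA n G)
    (hρc : ContinuousOn ρ (Ioi 0)) (hρpos : ∀ θ ∈ Ioi (0 : ℝ), 0 < ρ θ)
    (hρ : MonotoneOn ρ (Ioi 0)) : MemA n (fun θ => ρ θ * G θ) := by
  have hK := hG.strictMonoOn_pow_succ_mul
  obtain ⟨hGc, hGpos, -⟩ := hG
  refine memA_of_strictMonoOn_pow_succ_mul (hρc.mul hGc)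
    (fun θ hθ => mul_pos (hρpos θ hθ) (hGpos θ hθ)) fun a ha b hb hab => ?_
  have hKa : 0 ≤ a ^ (n + 1) * G a := (mul_pos (pow_pos ha _) (hGpos a ha)).le
  simpa only [mul_left_comm] using mul_lt_mul' (hρ ha hb hab.le) (hK ha hb hab) hKa (hρpos b hb)

noncomputable def ramp (a ε θ : ℝ) : ℝ := max 0 (min 1 ((θ - a) / ε))

section Ramp

variable {a ε θ : ℝ}

theorem continuous_ramp : Continuous (ramp a ε) := by
  unfold ramp; fun_prop

theorem monotone_ramp (hε : 0 ≤ ε) : Monotone (ramp a ε) := fun _ _ h =>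
  max_le_max le_rfl (min_le_min le_rfl (div_le_div_of_nonneg_right (by linarith) hε))

theorem ramp_nonneg : 0 ≤ ramp a ε θ := le_max_left _ _

theorem ramp_le_one : ramp a ε θ ≤ 1 := max_le zero_le_one (min_le_left _ _)

theorem ramp_eq_zero_of_le (hε : 0 ≤ ε) (h : θ ≤ a) : ramp a ε θ = 0 :=
  max_eq_left ((min_le_right _ _).trans (div_nonpos_of_nonpos_of_nonneg (by linarith) hε))

theorem ramp_eq_one_of_add_le (hε : 0 < ε) (h : a + ε ≤ θ) : ramp a ε θ = 1 := by
  have : 1 ≤ (θ - a) / ε := (le_div_iff₀ hε).2 (by linarith)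
  rw [ramp, min_eq_left this, max_eq_right zero_le_one]

end Ramp

noncomputable def rampProfile (c₁ c₂ r₁ r₂ ε θ : ℝ) : ℝ :=
  r₁ + (1 - r₁) * ramp c₁ ε θ + (r₂ - 1) * ramp (c₂ - ε) ε θ

section RampProfile

variable {c₁ c₂ r₁ r₂ ε θ : ℝ}

theorem continuous_rampProfile : Continuous (rampProfile c₁ c₂ r₁ r₂ ε) :=
  (continuous_const.add (continuous_const.mul continuous_ramp)).add
    (continuous_const.mul continuous_ramp)

theorem monotone_rampProfile (hr₁ : r₁ ≤ 1) (hr₂ : 1 ≤ r₂) (hε : 0 ≤ ε) :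
    Monotone (rampProfile c₁ c₂ r₁ r₂ ε) := fun x y h => by
  have h₁ := monotone_ramp (a := c₁) hε h
  have h₂ := monotone_ramp (a := c₂ - ε) hε h
  unfold rampProfile
  gcongr

theorem le_rampProfile (hr₁ : r₁ ≤ 1) (hr₂ : 1 ≤ r₂) : r₁ ≤ rampProfile c₁ c₂ r₁ r₂ ε θ := by
  have h₁ : 0 ≤ (1 - r₁) * ramp c₁ ε θ := mul_nonneg (by linarith) ramp_nonneg
  have h₂ : 0 ≤ (r₂ - 1) * ramp (c₂ - ε) ε θ := mul_nonneg (by linarith) ramp_nonneg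
  unfold rampProfile; linarith

theorem rampProfile_le (hr₁ : r₁ ≤ 1) (hr₂ : 1 ≤ r₂) : rampProfile c₁ c₂ r₁ r₂ ε θ ≤ r₂ := by
  have h₁ : (1 - r₁) * ramp c₁ ε θ ≤ 1 - r₁ :=
    mul_le_of_le_one_right (by linarith) ramp_le_one
  have h₂ : (r₂ - 1) * ramp (c₂ - ε) ε θ ≤ r₂ - 1 :=
    mul_le_of_le_one_right (by linarith) ramp_le_one
  unfold rampProfile; linarith

theorem rampProfile_left_endpoint (hε : 0 ≤ ε) (h : c₁ ≤ c₂ - ε) :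
    rampProfile c₁ c₂ r₁ r₂ ε c₁ = r₁ := by
  simp [rampProfile, ramp_eq_zero_of_le hε le_rfl, ramp_eq_zero_of_le hε h]

theorem rampProfile_right_endpoint (hε : 0 < ε) (h : c₁ + ε ≤ c₂) :
    rampProfile c₁ c₂ r₁ r₂ ε c₂ = r₂ := by
  simp [rampProfile, ramp_eq_one_of_add_le hε h, ramp_eq_one_of_add_le hε (sub_add_cancel c₂ ε).le]

theorem rampProfile_eq_one_of_mem_Icc (hε : 0 < ε) (hθ : θ ∈ Icc (c₁ + ε) (c₂ - ε)) :
    rampProfile c₁ c₂ r₁ r₂ ε θ = 1 := by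
  simp [rampProfile, ramp_eq_one_of_add_le hε hθ.1, ramp_eq_zero_of_le hε.le hθ.2]

end RampProfile

theorem modify_A_class_general (n : ℕ) (G : ℝ → ℝ) (hG : MemA n G)
    (c₁ c₂ a₁ a₂ : ℝ) (hc₁ : 0 < c₁) (hc : c₁ < c₂) (ha₁ : 0 < a₁)
    (h1 : a₁ ≤ G c₁) (h2 : G c₂ ≤ a₂) :
    ∃ ε₀ > (0 : ℝ), ∃ Gf : ℝ → ℝ → ℝ,
      (∀ ε ∈ Ioo (0 : ℝ) ε₀,
        MemA n (Gf ε) ∧ (∀ θ ∈ Icc (c₁ + ε) (c₂ - ε), Gf ε θ = G θ) ∧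
        Gf ε c₁ = a₁ ∧ Gf ε c₂ = a₂) ∧
      ∃ M : ℝ, ∀ ε ∈ Ioo (0 : ℝ) ε₀, ∀ θ ∈ Icc c₁ c₂, |Gf ε θ| ≤ M := by
  have hG₁ : 0 < G c₁ := hG.2.1 c₁ hc₁
  have hG₂ : 0 < G c₂ := hG.2.1 c₂ (hc₁.trans hc)
  set r₁ := a₁ / G c₁
  set r₂ := a₂ / G c₂
  have hr₁ : r₁ ≤ 1 := div_le_one_of_le₀ h1 hG₁.le
  have hr₂ : 1 ≤ r₂ := (one_le_div hG₂).2 h2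
  have hr₁pos : 0 < r₁ := div_pos ha₁ hG₁
  obtain ⟨C, hC⟩ := isCompact_Icc.exists_bound_of_continuousOn
    (f := G) (hG.1.mono fun θ (hθ : θ ∈ Icc c₁ c₂) => hc₁.trans_le hθ.1)
  refine ⟨(c₂ - c₁) / 2, by linarith, fun ε θ => rampProfile c₁ c₂ r₁ r₂ ε θ * G θ,
    fun ε ⟨hε, hεc⟩ => ⟨?_, fun θ hθ => ?_, ?_, ?_⟩, r₂ * C, fun ε _ θ hθ => ?_⟩
  · exact hG.mul_of_monotoneOn continuous_rampProfile.continuousOn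
      (fun θ _ => hr₁pos.trans_le (le_rampProfile hr₁ hr₂))
      ((monotone_rampProfile hr₁ hr₂ hε.le).monotoneOn _)
  · simp [rampProfile_eq_one_of_mem_Icc hε hθ]
  · beta_reduce
    rw [rampProfile_left_endpoint hε.le (by linarith), div_mul_cancel₀ _ hG₁.ne']
  · beta_reduce
    rw [rampProfile_right_endpoint hε (by linarith), div_mul_cancel₀ _ hG₂.ne']
  · rw [abs_mul, abs_of_pos (hr₁pos.trans_le (le_rampProfile hr₁ hr₂))]
    exact mul_le_mul (rampProfile_le hr₁ hr₂) (by simpa using hC θ hθ) (abs_nonneg _) (by linarith)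

/-- gluing/modification lemma for the class `𝒜(n)`: one can modify
`G ∈ 𝒜(n)` near `c₁` and `c₂` so as to prescribe the values `a₁`, `a₂` there, keeping
`G` unchanged on `[c₁+ε, c₂−ε]`, with the family uniformly bounded. -/
theorem modify_A_class (n : ℕ) (hn : 0 < n) (G : ℝ → ℝ) (hG : MemA n G)
    (c₁ c₂ a₁ a₂ : ℝ) (hc₁ : 0 < c₁) (hc : c₁ < c₂) (ha₁ : 0 < a₁) (ha : a₁ < a₂)
    (h1 : a₁ ≤ G c₁) (h2 : G c₂ ≤ a₂) :
    ∃ ε₀ > (0 : ℝ), ∃ Gf : ℝ → ℝ → ℝ,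
      (∀ ε ∈ Ioo (0 : ℝ) ε₀,
        MemA n (Gf ε) ∧ (∀ θ ∈ Icc (c₁ + ε) (c₂ - ε), Gf ε θ = G θ) ∧
        Gf ε c₁ = a₁ ∧ Gf ε c₂ = a₂) ∧
      ∃ M : ℝ, ∀ ε ∈ Ioo (0 : ℝ) ε₀, ∀ θ ∈ Icc c₁ c₂, |Gf ε θ| ≤ M :=
  modify_A_class_general n G hG c₁ c₂ a₁ a₂ hc₁ hc ha₁ h1 h2
end

section
/- Let T₁ and T₂ be regular strictly convex bodies in the plane ℝ², let p and q be two distinct points in bd T₁ ∩ bd T₂ such that the tangent lines of T₁ and T₂ at p coincide and the tangent lines of T₁ and T₂ at q coincide. Let ℓ be the line through p and q, with closed half-planes ℓ⁺, ℓ⁻. Then T := (T₁ ∩ ℓ⁺) ∪ (T₂ ∩ ℓ⁻) is a regular strictly convex body. -/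
/-!
The supporting half-planes at `p` and `q` contain `T₁ ∪ T₂`, hence its convex hull, and since
the chord line `ℓ` is tangent at neither point, their intersection meets `ℓ` exactly in the
chord `[p, q] ⊆ T₁ ∩ T₂`. So a segment joining the two halves of `T` crosses `ℓ` inside
`T₁ ∩ T₂`, which makes `T` convex. Off `ℓ`, `T` coincides near each point with `T₁` or with
`T₂`; interior points and, for convex sets, supporting lines are local notions, which gives strict
convexity and regularity there. On `ℓ` the only boundary points of `T` are `p` and `q`: they are
exposed by the common tangents, and every supporting line of `T` supports `T₁` or `T₂`, so it
is the common tangent.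
-/

open Set

abbrev E2 := EuclideanSpace ℝ (Fin 2)

/-- `v` is an outer normal of a supporting line of `T` at `x`. -/
def SupportsAt (T : Set E2) (v x : E2) : Prop :=
  ∀ y ∈ T, (inner ℝ v y : ℝ) ≤ (inner ℝ v x : ℝ)

/-- A planar convex body: compact, convex, nonempty interior. -/
def IsBody2 (T : Set E2) : Prop :=
  IsCompact T ∧ Convex ℝ T ∧ (interior T).Nonempty

/-- A body is regular if each boundary point has a unique outer unit normal. -/
def RegularBody (T : Set E2) : Prop :=
  ∀ x ∈ frontier T, ∃! v : E2, ‖v‖ = 1 ∧ SupportsAt T v x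

open Filter Topology
open scoped RealInnerProductSpace

theorem Filter.EventuallyEq.mem_frontier_iff {X : Type*} [TopologicalSpace X] {s t : Set X}
    {x : X} (h : s =ᶠ[𝓝 x] t) : x ∈ frontier s ↔ x ∈ frontier t := by
  change x ∈ closure s ∧ x ∉ interior s ↔ x ∈ closure t ∧ x ∉ interior t
  rw [mem_closure_iff_nhdsWithin_neBot, mem_closure_iff_nhdsWithin_neBot,
    nhdsWithin_eq_iff_eventuallyEq.2 h, h.mem_interior_iff]

section Glue

variable {E : Type*} [NormedAddCommGroup E] [InnerProductSpace ℝ E]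

def glue (A B : Set E) (n p : E) : Set E :=
  A ∩ {x | 0 ≤ ⟪n, x - p⟫} ∪ B ∩ {x | ⟪n, x - p⟫ ≤ 0}

variable {A B : Set E} {n p x y w : E}

theorem glue_comm (A B : Set E) (n p : E) : glue A B n p = glue B A (-n) p := by
  ext x
  simp only [glue, mem_union, mem_inter_iff, mem_ofPred_eq, inner_neg_left, neg_nonneg,
    neg_nonpos]
  exact Or.comm

theorem glue_subset_union : glue A B n p ⊆ A ∪ B :=
  union_subset_union inter_subset_left inter_subset_left

theorem inter_subset_glue : A ∩ B ⊆ glue A B n p := by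
  rintro x ⟨hxA, hxB⟩
  rcases le_total 0 ⟪n, x - p⟫ with h | h
  exacts [Or.inl ⟨hxA, h⟩, Or.inr ⟨hxB, h⟩]

theorem IsClosed.glue (hA : IsClosed A) (hB : IsClosed B) : IsClosed (glue A B n p) := by
  have hf : Continuous fun y : E => ⟪n, y - p⟫ := by fun_prop
  exact (hA.inter (_root_.isClosed_le continuous_const hf)).union
    (hB.inter (_root_.isClosed_le hf continuous_const))

theorem IsCompact.glue (hA : IsCompact A) (hB : IsCompact B) : IsCompact (glue A B n p) :=
  (hA.union hB).of_isClosed_subset (hA.isClosed.glue hB.isClosed) glue_subset_union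

theorem glue_eventuallyEq_of_pos (hx : 0 < ⟪n, x - p⟫) : glue A B n p =ᶠ[𝓝 x] A := by
  refine eventuallyEq_set.2 ?_
  have hf : Continuous fun y : E => ⟪n, y - p⟫ := by fun_prop
  filter_upwards [(isOpen_lt continuous_const hf).mem_nhds hx] with y (hy : 0 < ⟪n, y - p⟫)
  simp [glue, hy.le, hy.not_ge]

theorem exists_mem_segment_inner_sub_eq_zero (hx : 0 ≤ ⟪n, x - p⟫) (hy : ⟪n, y - p⟫ ≤ 0) :
    ∃ z ∈ segment ℝ x y, ⟪n, z - p⟫ = 0 :=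
  (convex_segment x y).isPreconnected.intermediate_value (right_mem_segment ℝ x y)
    (left_mem_segment ℝ x y) (f := fun z => ⟪n, z - p⟫) (by fun_prop) ⟨hy, hx⟩

theorem convex_setOf_inner_sub_nonneg (n p : E) : Convex ℝ {x | 0 ≤ ⟪n, x - p⟫} := by
  simp_rw [inner_sub_right, sub_nonneg]
  exact convex_halfSpace_ge (innerₛₗ ℝ n).isLinear _

theorem convex_setOf_inner_sub_nonpos (n p : E) : Convex ℝ {x | ⟪n, x - p⟫ ≤ 0} := by
  simp_rw [inner_sub_right, sub_nonpos]
  exact convex_halfSpace_le (innerₛₗ ℝ n).isLinear _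

/-- The point where the segment `[w, y]` crosses the line lies in `A`, and `w` lies between `x`
and that point. -/
theorem Convex.mem_of_mem_segment_of_inner_sub_nonneg {A : Set E} (hA : Convex ℝ A) (hx : x ∈ A)
    (hy : ⟪n, y - p⟫ ≤ 0) (hxy : ∀ z ∈ segment ℝ x y, ⟪n, z - p⟫ = 0 → z ∈ A)
    (hw : w ∈ segment ℝ x y) (hnw : 0 ≤ ⟪n, w - p⟫) : w ∈ A := by
  obtain ⟨z, hz, hnz⟩ := exists_mem_segment_inner_sub_eq_zero hnw hy
  have hzA : z ∈ A :=
    hxy z ((convex_segment x y).segment_subset hw (right_mem_segment ℝ x y) hz) hnz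
  have hwxz : w ∈ segment ℝ x z := by
    rw [mem_segment_iff_wbtw] at hw hz ⊢
    exact hw.trans_right_left hz
  exact hA.segment_subset hx hzA hwxz

theorem segment_subset_glue
    (hcross : ∀ z ∈ convexHull ℝ (A ∪ B), ⟪n, z - p⟫ = 0 → z ∈ A ∧ z ∈ B)
    (hA : Convex ℝ A) (hB : Convex ℝ B) (hx : x ∈ A)
    (hnx : 0 ≤ ⟪n, x - p⟫) (hy : y ∈ B) (hny : ⟪n, y - p⟫ ≤ 0) :
    segment ℝ x y ⊆ glue A B n p := by
  have hcross' : ∀ z ∈ segment ℝ x y, ⟪n, z - p⟫ = 0 → z ∈ A ∧ z ∈ B := fun z hz =>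
    hcross z (segment_subset_convexHull (mem_union_left B hx) (mem_union_right A hy) hz)
  intro w hw
  rcases le_total 0 ⟪n, w - p⟫ with hnw | hnw
  · exact Or.inl ⟨hA.mem_of_mem_segment_of_inner_sub_nonneg hx hny
      (fun z hz hnz => (hcross' z hz hnz).1) hw hnw, hnw⟩
  · rw [segment_symm] at hw hcross'
    refine Or.inr ⟨hB.mem_of_mem_segment_of_inner_sub_nonneg (n := -n) (p := p) hy
      (by simpa [inner_neg_left] using hnx)
      (fun z hz hnz => (hcross' z hz (by simpa [inner_neg_left] using hnz)).2) hw
      (by simpa [inner_neg_left] using hnw), hnw⟩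

theorem convex_glue
    (hcross : ∀ z ∈ convexHull ℝ (A ∪ B), ⟪n, z - p⟫ = 0 → z ∈ A ∧ z ∈ B)
    (hA : Convex ℝ A) (hB : Convex ℝ B) : Convex ℝ (glue A B n p) := by
  refine convex_iff_segment_subset.2 ?_
  rintro x (⟨hx, hnx⟩ | ⟨hx, hnx⟩) y (⟨hy, hny⟩ | ⟨hy, hny⟩)
  · exact ((hA.inter (convex_setOf_inner_sub_nonneg n p)).segment_subset ⟨hx, hnx⟩
      ⟨hy, hny⟩).trans subset_union_left
  · exact segment_subset_glue hcross hA hB hx hnx hy hny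
  · rw [segment_symm]
    exact segment_subset_glue hcross hA hB hy hny hx hnx
  · exact ((hB.inter (convex_setOf_inner_sub_nonpos n p)).segment_subset ⟨hx, hnx⟩
      ⟨hy, hny⟩).trans subset_union_right

/-- Near `w` the segment `[x, y]` runs inside `A`, so `w` lies on a shorter chord of `A`. -/
theorem Convex.mem_interior_of_eventuallyEq {S A : Set E} (hS : Convex ℝ S)
    (hA : StrictConvex ℝ A) (hx : x ∈ S) (hy : y ∈ S) (hxy : x ≠ y) (hw : w ∈ openSegment ℝ x y)
    (h : S =ᶠ[𝓝 w] A) : w ∈ interior S := by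
  have hwS : w ∈ S := hS.openSegment_subset hx hy hw
  have hnear : ∀ z ∈ S, ∀ᶠ ε in 𝓝[>] (0 : ℝ), w + ε • (z - w) ∈ A := by
    intro z hz
    have hlim : Tendsto (fun ε : ℝ => w + ε • (z - w)) (𝓝[>] 0) (𝓝 w) := by
      have hc : Continuous fun ε : ℝ => w + ε • (z - w) := by fun_prop
      simpa using (hc.tendsto 0).mono_left nhdsWithin_le_nhds
    filter_upwards [hlim.eventually (eventuallyEq_set.1 h), Ioo_mem_nhdsGT one_pos]
      with ε hε hε1
    exact hε.1 (hS.add_smul_sub_mem hwS hz ⟨hε1.1.le, hε1.2.le⟩)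
  obtain ⟨ε, hxε, hyε, hε⟩ :=
    ((hnear x hx).and ((hnear y hy).and self_mem_nhdsWithin)).exists
  obtain ⟨a, b, ha, hb, hab, rfl⟩ := hw
  refine h.mem_interior_iff.2 (hA.openSegment_subset hxε hyε ?_ ⟨a, b, ha, hb, hab, ?_⟩)
  · simpa [sub_eq_zero, hε.ne'] using hxy
  · obtain rfl : b = 1 - a := by linarith
    module

theorem openSegment_subset_interior_glue (hA : StrictConvex ℝ A) (hB : StrictConvex ℝ B)
    (hxA : x ∈ A) (hyA : y ∈ A) (hxB : x ∈ B) (hyB : y ∈ B) (hxy : x ≠ y) :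
    openSegment ℝ x y ⊆ interior (glue A B n p) := by
  refine Subset.trans ?_ (interior_mono inter_subset_glue)
  rw [interior_inter]
  exact subset_inter (hA.openSegment_subset hxA hyA hxy) (hB.openSegment_subset hxB hyB hxy)

theorem strictConvex_glue (hA : StrictConvex ℝ A) (hB : StrictConvex ℝ B)
    (hT : Convex ℝ (glue A B n p))
    (hline : ∀ w ∈ glue A B n p, ⟪n, w - p⟫ = 0 →
      w ∈ interior (glue A B n p) ∨ w ∈ (glue A B n p).extremePoints ℝ) :
    StrictConvex ℝ (glue A B n p) := by
  intro x hx y hy hxy a b ha hb hab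
  have hw : a • x + b • y ∈ openSegment ℝ x y := ⟨a, b, ha, hb, hab, rfl⟩
  rcases lt_trichotomy ⟪n, a • x + b • y - p⟫ 0 with hneg | hzero | hpos
  · rw [glue_comm] at hT hx hy ⊢
    exact hT.mem_interior_of_eventuallyEq hB hx hy hxy hw
      (glue_eventuallyEq_of_pos (by simpa [inner_neg_left] using hneg))
  · rcases hline _ (hT.openSegment_subset hx hy hw) hzero with hint | hext
    · exact hint
    · obtain ⟨hxw, hyw⟩ := (mem_extremePoints.1 hext).2 x hx y hy hw
      exact absurd (hxw.trans hyw.symm) hxy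
  · exact hT.mem_interior_of_eventuallyEq hA hx hy hxy hw (glue_eventuallyEq_of_pos hpos)

theorem mem_extremePoints_of_inner_lt {S : Set E} {v : E} (hp : p ∈ S)
    (h : ∀ y ∈ S, y ≠ p → ⟪v, y⟫ < ⟪v, p⟫) : p ∈ S.extremePoints ℝ := by
  refine exposedPoints_subset_extremePoints ⟨hp, innerSL ℝ v, fun y hy => ?_⟩
  rcases eq_or_ne y p with rfl | hyp
  · exact ⟨le_rfl, fun _ => rfl⟩
  · exact ⟨(h y hy hyp).le, fun h' => absurd h' (h y hy hyp).not_ge⟩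

theorem exists_eq_smul_of_inner_eq_zero [FiniteDimensional ℝ E] (hE : Module.finrank ℝ E = 2)
    {u z : E} (hn : n ≠ 0) (hu : u ≠ 0) (hnu : ⟪n, u⟫ = 0) (hnz : ⟪n, z⟫ = 0) :
    ∃ t : ℝ, z = t • u := by
  have hK : (ℝ ∙ n)ᗮ = ℝ ∙ u := by
    refine (Submodule.eq_of_le_of_finrank_eq ?_ ?_).symm
    · rwa [Submodule.span_singleton_le_iff_mem, Submodule.mem_orthogonal_singleton_iff_inner_right]
    · have := Submodule.finrank_add_finrank_orthogonal (K := ℝ ∙ n)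
      rw [finrank_span_singleton hn, hE] at this
      rw [finrank_span_singleton hu]
      omega
  have hz : z ∈ ℝ ∙ u := hK ▸ Submodule.mem_orthogonal_singleton_iff_inner_right.2 hnz
  obtain ⟨t, rfl⟩ := Submodule.mem_span_singleton.1 hz
  exact ⟨t, rfl⟩

end Glue

section Planar

variable {A B S : Set E2} {n p q v x y : E2}

theorem SupportsAt.mono {T : Set E2} (h : SupportsAt S v x) (hTS : T ⊆ S) : SupportsAt T v x :=
  fun y hy => h y (hTS hy)

theorem SupportsAt.union (hA : SupportsAt A v x) (hB : SupportsAt B v x) :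
    SupportsAt (A ∪ B) v x :=
  fun y hy => hy.elim (hA y) (hB y)

theorem SupportsAt.convexHull (h : SupportsAt S v x) : SupportsAt (convexHull ℝ S) v x :=
  fun _ hy => convexHull_min h (convex_halfSpace_le (innerₛₗ ℝ v).isLinear _) hy

theorem SupportsAt.of_eventuallyEq {S' : Set E2} (h : SupportsAt S v x) (hS' : Convex ℝ S')
    (hx : x ∈ S') (hSS' : S =ᶠ[𝓝 x] S') : SupportsAt S' v x := by
  have hloc : IsLocalMaxOn (fun y => ⟪v, y⟫) S' x := by
    rw [IsLocalMaxOn, ← nhdsWithin_eq_iff_eventuallyEq.2 hSS']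
    exact (isMaxOn_iff.2 h).localize
  exact isMaxOn_iff.1 (.of_isLocalMaxOn_of_concaveOn hx hloc ((innerₛₗ ℝ v).concaveOn hS'))

theorem supportsAt_congr {S' : Set E2} (hS : Convex ℝ S) (hS' : Convex ℝ S') (hx : x ∈ S)
    (hSS' : S =ᶠ[𝓝 x] S') : SupportsAt S v x ↔ SupportsAt S' v x :=
  have hx' : x ∈ S' := (eventuallyEq_set.1 hSS').self_of_nhds.1 hx
  ⟨fun h => h.of_eventuallyEq hS' hx' hSS', fun h => h.of_eventuallyEq hS hx hSS'.symm⟩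

theorem SupportsAt.eq_zero_of_mem_interior (h : SupportsAt S v x) (hx : x ∈ interior S) :
    v = 0 := by
  have hmax : IsLocalMax (fun y => ⟪v, y⟫) x :=
    (isMaxOn_iff.2 h).isLocalMax (mem_interior_iff_mem_nhds.1 hx)
  have hderiv := hmax.fderiv_eq_zero
  rw [← coe_innerSL_apply, ContinuousLinearMap.fderiv] at hderiv
  simpa using DFunLike.congr_fun hderiv v

theorem StrictConvex.inner_lt_of_supportsAt (hA : StrictConvex ℝ A) (hv : v ≠ 0)
    (hs : SupportsAt A v x) (hx : x ∈ A) (hy : y ∈ A) (hyx : y ≠ x) : ⟪v, y⟫ < ⟪v, x⟫ := by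
  refine (hs y hy).lt_of_ne fun hxy => hv ?_
  have hm : (1 / 2 : ℝ) • x + (1 / 2 : ℝ) • y ∈ interior A :=
    hA hx hy hyx.symm (by norm_num) (by norm_num) (by norm_num)
  refine SupportsAt.eq_zero_of_mem_interior (fun z hz => ?_) hm
  rw [inner_add_right, real_inner_smul_right, real_inner_smul_right, hxy]
  linarith [hs z hz]

theorem inner_lt_of_supportsAt_union (hA : StrictConvex ℝ A) (hB : StrictConvex ℝ B)
    (hv : ‖v‖ = 1) (hxA : x ∈ A) (hxB : x ∈ B) (hvA : SupportsAt A v x)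
    (hvB : SupportsAt B v x) : ∀ y ∈ A ∪ B, y ≠ x → ⟪v, y⟫ < ⟪v, x⟫ := by
  have hv0 : v ≠ 0 := norm_ne_zero_iff.1 (by simp [hv])
  exact fun y hy hyx => hy.elim (hA.inner_lt_of_supportsAt hv0 hvA hxA · hyx)
    (hB.inner_lt_of_supportsAt hv0 hvB hxB · hyx)

theorem mem_extremePoints_glue (hA : StrictConvex ℝ A) (hB : StrictConvex ℝ B)
    (hv : ‖v‖ = 1) (hxA : x ∈ A) (hxB : x ∈ B) (hvA : SupportsAt A v x)
    (hvB : SupportsAt B v x) : x ∈ (glue A B n p).extremePoints ℝ :=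
  mem_extremePoints_of_inner_lt (inter_subset_glue ⟨hxA, hxB⟩) fun y hy =>
    inner_lt_of_supportsAt_union hA hB hv hxA hxB hvA hvB y (glue_subset_union hy)

theorem mem_segment_of_supportsAt (hn : n ≠ 0) (hnq : ⟪n, q - p⟫ = 0) {vp vq z : E2}
    (hvp : SupportsAt S vp p) (hvq : SupportsAt S vq q) (hvpq : ⟪vp, q⟫ < ⟪vp, p⟫)
    (hvqp : ⟪vq, p⟫ < ⟪vq, q⟫) (hz : z ∈ S) (hnz : ⟪n, z - p⟫ = 0) : z ∈ segment ℝ p q := by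
  have hqp : q - p ≠ 0 := sub_ne_zero.2 (by rintro rfl; exact hvpq.false)
  obtain ⟨t, ht⟩ := exists_eq_smul_of_inner_eq_zero finrank_euclideanSpace_fin hn hqp hnq hnz
  have hzt : z = p + t • (q - p) := by rw [← ht]; abel
  have hp' := hvp z hz
  have hq' := hvq z hz
  rw [hzt, inner_add_right, real_inner_smul_right, inner_sub_right] at hp' hq'
  rw [segment_eq_image']
  refine ⟨t, ⟨?_, ?_⟩, hzt.symm⟩ <;> nlinarith

theorem supportsAt_or_of_supportsAt_glue
    (hcross : ∀ z ∈ convexHull ℝ (A ∪ B), ⟪n, z - p⟫ = 0 → z ∈ A ∧ z ∈ B)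
    (h : SupportsAt (glue A B n p) v x) : SupportsAt A v x ∨ SupportsAt B v x := by
  by_contra! hAB
  obtain ⟨⟨y₁, hy₁, hv₁⟩, ⟨y₂, hy₂, hv₂⟩⟩ :
      (∃ y ∈ A, ⟪v, x⟫ < ⟪v, y⟫) ∧ ∃ y ∈ B, ⟪v, x⟫ < ⟪v, y⟫ := by
    simpa [SupportsAt] using hAB
  have hn₁ : ⟪n, y₁ - p⟫ < 0 := by
    by_contra! hn
    exact (h y₁ (Or.inl ⟨hy₁, hn⟩)).not_gt hv₁
  have hn₂ : 0 < ⟪n, y₂ - p⟫ := by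
    by_contra! hn
    exact (h y₂ (Or.inr ⟨hy₂, hn⟩)).not_gt hv₂
  obtain ⟨z, hz, hnz⟩ := exists_mem_segment_inner_sub_eq_zero hn₂.le hn₁.le
  have hzT : z ∈ glue A B n p := inter_subset_glue
    (hcross z (segment_subset_convexHull (mem_union_right A hy₂) (mem_union_left B hy₁) hz) hnz)
  have hvz : ⟪v, x⟫ < ⟪v, z⟫ :=
    (convex_halfSpace_gt (innerₛₗ ℝ v).isLinear _).segment_subset hv₂ hv₁ hz
  exact (h z hzT).not_gt hvz

theorem existsUnique_supportsAt_glue_of_pos (hA : Convex ℝ A) (hT : Convex ℝ (glue A B n p))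
    (hTc : IsClosed (glue A B n p)) (hreg : RegularBody A) (hx : x ∈ frontier (glue A B n p))
    (hnx : 0 < ⟪n, x - p⟫) : ∃! v : E2, ‖v‖ = 1 ∧ SupportsAt (glue A B n p) v x := by
  have h : glue A B n p =ᶠ[𝓝 x] A := glue_eventuallyEq_of_pos hnx
  simp_rw [supportsAt_congr hT hA (hTc.frontier_subset hx) h]
  exact hreg x (h.mem_frontier_iff.1 hx)

theorem existsUnique_supportsAt_glue
    (hcross : ∀ z ∈ convexHull ℝ (A ∪ B), ⟪n, z - p⟫ = 0 → z ∈ A ∧ z ∈ B)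
    (hregA : RegularBody A) (hregB : RegularBody B) (hxA : x ∈ frontier A)
    (hxB : x ∈ frontier B) (hv : ‖v‖ = 1) (hvA : SupportsAt A v x) (hvB : SupportsAt B v x) :
    ∃! w : E2, ‖w‖ = 1 ∧ SupportsAt (glue A B n p) w x := by
  refine ⟨v, ⟨hv, (hvA.union hvB).mono glue_subset_union⟩, fun w ⟨hw, hwT⟩ => ?_⟩
  rcases supportsAt_or_of_supportsAt_glue hcross hwT with h | h
  · exact (hregA x hxA).unique ⟨hw, h⟩ ⟨hv, hvA⟩
  · exact (hregB x hxB).unique ⟨hw, h⟩ ⟨hv, hvB⟩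

theorem regularBody_glue (hA : Convex ℝ A) (hB : Convex ℝ B) (hAc : IsClosed A)
    (hBc : IsClosed B) (hregA : RegularBody A) (hregB : RegularBody B)
    (hcross : ∀ z ∈ convexHull ℝ (A ∪ B), ⟪n, z - p⟫ = 0 → z ∈ A ∧ z ∈ B)
    (hline : ∀ x ∈ frontier (glue A B n p), ⟪n, x - p⟫ = 0 → ∃ v : E2, ‖v‖ = 1 ∧
      x ∈ frontier A ∧ x ∈ frontier B ∧ SupportsAt A v x ∧ SupportsAt B v x) :
    RegularBody (glue A B n p) := by
  have hT := convex_glue hcross hA hB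
  have hTc := hAc.glue hBc (n := n) (p := p)
  intro x hx
  rcases lt_trichotomy ⟪n, x - p⟫ 0 with hneg | hzero | hpos
  · rw [glue_comm] at hT hTc hx ⊢
    exact existsUnique_supportsAt_glue_of_pos hB hT hTc hregB hx
      (by simpa [inner_neg_left] using hneg)
  · obtain ⟨v, hv, hxA, hxB, hvA, hvB⟩ := hline x hx hzero
    exact existsUnique_supportsAt_glue hcross hregA hregB hxA hxB hv hvA hvB
  · exact existsUnique_supportsAt_glue_of_pos hA hT hTc hregA hx hpos

end Planar

/-- gluing two regular strictly convex planar bodies along a chord through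
two common boundary points with common tangent lines yields a regular strictly convex
body. -/
theorem glue_regular_strictly_convex (T₁ T₂ : Set E2)
    (h₁ : IsBody2 T₁) (h₂ : IsBody2 T₂)
    (hsc₁ : StrictConvex ℝ T₁) (hsc₂ : StrictConvex ℝ T₂)
    (hreg₁ : RegularBody T₁) (hreg₂ : RegularBody T₂)
    (p q : E2) (hpq : p ≠ q)
    (hp : p ∈ frontier T₁ ∩ frontier T₂) (hq : q ∈ frontier T₁ ∩ frontier T₂)
    -- the tangent lines of `T₁` and `T₂` coincide at `p` and at `q`
    (htp : ∃ v : E2, ‖v‖ = 1 ∧ SupportsAt T₁ v p ∧ SupportsAt T₂ v p)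
    (htq : ∃ v : E2, ‖v‖ = 1 ∧ SupportsAt T₁ v q ∧ SupportsAt T₂ v q)
    (nl : E2) (hnl : nl ≠ 0) (hperp : (inner ℝ nl (q - p) : ℝ) = 0) :
    IsBody2 ((T₁ ∩ {x | 0 ≤ (inner ℝ nl (x - p) : ℝ)}) ∪
        (T₂ ∩ {x | (inner ℝ nl (x - p) : ℝ) ≤ 0})) ∧
    StrictConvex ℝ ((T₁ ∩ {x | 0 ≤ (inner ℝ nl (x - p) : ℝ)}) ∪
        (T₂ ∩ {x | (inner ℝ nl (x - p) : ℝ) ≤ 0})) ∧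
    RegularBody ((T₁ ∩ {x | 0 ≤ (inner ℝ nl (x - p) : ℝ)}) ∪
        (T₂ ∩ {x | (inner ℝ nl (x - p) : ℝ) ≤ 0})) := by
  change IsBody2 (glue T₁ T₂ nl p) ∧ StrictConvex ℝ (glue T₁ T₂ nl p) ∧
    RegularBody (glue T₁ T₂ nl p)
  obtain ⟨vp, hvp, hvp₁, hvp₂⟩ := htp
  obtain ⟨vq, hvq, hvq₁, hvq₂⟩ := htq
  have hp₁ := h₁.1.isClosed.frontier_subset hp.1
  have hp₂ := h₂.1.isClosed.frontier_subset hp.2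
  have hq₁ := h₁.1.isClosed.frontier_subset hq.1
  have hq₂ := h₂.1.isClosed.frontier_subset hq.2
  have hchord : ∀ z ∈ convexHull ℝ (T₁ ∪ T₂), ⟪nl, z - p⟫ = 0 → z ∈ segment ℝ p q :=
    fun z hz => mem_segment_of_supportsAt hnl hperp (hvp₁.union hvp₂).convexHull
      (hvq₁.union hvq₂).convexHull
      (inner_lt_of_supportsAt_union hsc₁ hsc₂ hvp hp₁ hp₂ hvp₁ hvp₂ q (Or.inl hq₁) hpq.symm)
      (inner_lt_of_supportsAt_union hsc₁ hsc₂ hvq hq₁ hq₂ hvq₁ hvq₂ p (Or.inl hp₁) hpq) hz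
  have hcross z hz hnz : z ∈ T₁ ∧ z ∈ T₂ :=
    have hz' := hchord z hz hnz
    ⟨h₁.2.1.segment_subset hp₁ hq₁ hz', h₂.2.1.segment_subset hp₂ hq₂ hz'⟩
  have hT := convex_glue hcross h₁.2.1 h₂.2.1
  have hopen : openSegment ℝ p q ⊆ interior (glue T₁ T₂ nl p) :=
    openSegment_subset_interior_glue hsc₁ hsc₂ hp₁ hq₁ hp₂ hq₂ hpq
  have hline z (hz : z ∈ glue T₁ T₂ nl p) (hnz : ⟪nl, z - p⟫ = 0) :
      z = p ∨ z = q ∨ z ∈ openSegment ℝ p q := by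
    simpa only [← insert_endpoints_openSegment, mem_insert_iff] using
      hchord z (subset_convexHull ℝ _ (glue_subset_union hz)) hnz
  refine ⟨⟨h₁.1.glue h₂.1, hT, _, hopen (midpoint_mem_openSegment ..)⟩, ?_, ?_⟩
  · refine strictConvex_glue hsc₁ hsc₂ hT fun w hw hnw => ?_
    rcases hline w hw hnw with rfl | rfl | hw'
    · exact Or.inr (mem_extremePoints_glue hsc₁ hsc₂ hvp hp₁ hp₂ hvp₁ hvp₂)
    · exact Or.inr (mem_extremePoints_glue hsc₁ hsc₂ hvq hq₁ hq₂ hvq₁ hvq₂)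
    · exact Or.inl (hopen hw')
  · refine regularBody_glue h₁.2.1 h₂.2.1 h₁.1.isClosed h₂.1.isClosed hreg₁ hreg₂ hcross
      fun x hx hnx => ?_
    rcases hline x ((h₁.1.glue h₂.1).isClosed.frontier_subset hx) hnx with rfl | rfl | hx'
    · exact ⟨vp, hvp, hp.1, hp.2, hvp₁, hvp₂⟩
    · exact ⟨vq, hvq, hq.1, hq.2, hvq₁, hvq₂⟩
    · exact absurd (hopen hx') hx.2
end
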